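/- Let T : ℓ² → W ⊆ H be the synthesis operator of a frame {f_n} for the closed subspace W, let M be a closed subspace with H = W ∔ M^⊥, let B ∈ L(ℓ², H) with R(B) = M, and let D be a positive invertible diagonal operator on ℓ². Set T̂ = B (D^{1/2} T* B)† D^{1/2}. Then T T̂* is the (oblique) projection onto W with kernel M^⊥; consequently {g_n} = {T̂ e_n} is an oblique dual frame of {f_n} in M, i.e., f = Σ_n ⟨f, g_n⟩ f_n for all f ∈ W. -/

import Mathlib

/-!
Write `R = T D^{1/2}` and `A = D^{1/2} T* B`, so that `R(R) = W` and `A* = B* R`. Because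
`H = W ∔ M^⊥`, the adjoint `B*` is bounded below on `W` (open mapping for `B` onto `M`, combined
with the bounded oblique projection onto `W` along `M^⊥`), so `A*` has closed range and the
Penrose equations for `A` are solvable: `A†` is a genuine Moore–Penrose inverse, not the junk
value `0`. Now `T T̂* = R (A†)* B*` and `A* (A†)* A* = A*`, i.e. `B* (R (A†)* B* R - R) = 0`.
Since `R(R) = W` meets `ker B* = M^⊥` only in `0`, `T T̂*` fixes `W`; it kills `M^⊥`, so it is
the oblique projection, and expanding `T̂* g` in the canonical basis gives the reconstruction
formula.
-/

open ContinuousLinearMap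
open scoped Classical

variable {H : Type*} [NormedAddCommGroup H] [InnerProductSpace ℂ H] [CompleteSpace H]

/-- The Moore–Penrose pseudoinverse (via choice; `0` if it does not exist). -/
noncomputable def pinv {E F : Type*} [NormedAddCommGroup E] [InnerProductSpace ℂ E]
    [CompleteSpace E] [NormedAddCommGroup F] [InnerProductSpace ℂ F] [CompleteSpace F]
    (A : E →L[ℂ] F) : F →L[ℂ] E :=
  if h : ∃ B : F →L[ℂ] E, A ∘L B ∘L A = A ∧ B ∘L A ∘L B = B ∧
      IsSelfAdjoint (A ∘L B) ∧ IsSelfAdjoint (B ∘L A)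
  then h.choose else 0

open Submodule
open scoped InnerProductSpace

theorem LinearMap.apply_comp_comp_eq_self_of_disjoint {R M N P : Type*} [Ring R]
    [AddCommGroup M] [AddCommGroup N] [AddCommGroup P] [Module R M] [Module R N] [Module R P]
    {f : M →ₗ[R] N} {g : N →ₗ[R] P} {h : P →ₗ[R] M}
    (hfgh : ∀ x, g (f (h (g (f x)))) = g (f x)) (hdisj : Disjoint (range f) (ker g)) (x : M) :
    f (h (g (f x))) = f x := by
  have hmem : f (h (g (f x)) - x) ∈ range f ⊓ ker g :=
    ⟨mem_range_self f _, by simp [hfgh]⟩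
  rw [hdisj.eq_bot, Submodule.mem_bot, map_sub, sub_eq_zero] at hmem
  exact hmem

theorem Submodule.eq_projectionL_of_forall_mem {R M : Type*} [Ring R] [TopologicalSpace M]
    [AddCommGroup M] [Module R M] {p q : Submodule R M} (h : IsTopCompl p q) {Q : M →L[R] M}
    (hp : ∀ v ∈ p, Q v = v) (hq : ∀ v ∈ q, Q v = 0) : Q = p.projectionL q h := by
  ext x
  obtain ⟨u, w, rfl, -⟩ := existsUnique_add_of_isCompl h.isCompl x
  simp [hp u u.2, hq w w.2]

section MoorePenrose

variable {𝕜 E F : Type*} [RCLike 𝕜]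
  [NormedAddCommGroup E] [InnerProductSpace 𝕜 E] [CompleteSpace E]
  [NormedAddCommGroup F] [InnerProductSpace 𝕜 F] [CompleteSpace F]

structure IsMoorePenroseInverse (A : E →L[𝕜] F) (X : F →L[𝕜] E) : Prop where
  mul_inv_mul : A ∘L X ∘L A = A
  inv_mul_inv : X ∘L A ∘L X = X
  isSelfAdjoint_mul_inv : IsSelfAdjoint (A ∘L X)
  isSelfAdjoint_inv_mul : IsSelfAdjoint (X ∘L A)

theorem IsMoorePenroseInverse.adjoint {A : E →L[𝕜] F} {X : F →L[𝕜] E}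
    (h : IsMoorePenroseInverse A X) : IsMoorePenroseInverse (adjoint A) (adjoint X) where
  mul_inv_mul := by
    simpa only [adjoint_comp, comp_assoc] using congrArg ContinuousLinearMap.adjoint h.mul_inv_mul
  inv_mul_inv := by
    simpa only [adjoint_comp, comp_assoc] using congrArg ContinuousLinearMap.adjoint h.inv_mul_inv
  isSelfAdjoint_mul_inv := by
    rw [← adjoint_comp]
    exact IsSelfAdjoint.star_iff.mpr h.isSelfAdjoint_inv_mul
  isSelfAdjoint_inv_mul := by
    rw [← adjoint_comp]
    exact IsSelfAdjoint.star_iff.mpr h.isSelfAdjoint_mul_inv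

theorem IsMoorePenroseInverse.of_comp_eq_starProjection {A : E →L[𝕜] F} {X : F →L[𝕜] E}
    {K : Submodule 𝕜 F} {N : Submodule 𝕜 E} [K.HasOrthogonalProjection]
    [N.HasOrthogonalProjection] (hAX : A ∘L X = K.starProjection)
    (hXA : X ∘L A = N.starProjection) (hA : ∀ x, A x ∈ K) (hX : ∀ y, X y ∈ N) :
    IsMoorePenroseInverse A X where
  mul_inv_mul := by
    rw [← comp_assoc, hAX]
    ext x
    exact starProjection_eq_self_iff.mpr (hA x)
  inv_mul_inv := by
    rw [← comp_assoc, hXA]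
    ext y
    exact starProjection_eq_self_iff.mpr (hX y)
  isSelfAdjoint_mul_inv := hAX ▸ isSelfAdjoint_starProjection K
  isSelfAdjoint_inv_mul := hXA ▸ isSelfAdjoint_starProjection N

omit [CompleteSpace F] in
theorem comp_starProjection_orthogonal_ker (A : E →L[𝕜] F) :
    A ∘L A.kerᗮ.starProjection = A := by
  have : CompleteSpace A.ker := A.isClosed_ker.completeSpace_coe
  ext x
  have hker : A (A.ker.starProjection x) = 0 := starProjection_apply_mem A.ker x
  simp [starProjection_orthogonal, hker]

theorem exists_isMoorePenroseInverse (A : E →L[𝕜] F) (hA : IsClosed (A.range : Set F)) :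
    ∃ X, IsMoorePenroseInverse A X := by
  have : CompleteSpace A.range := hA.completeSpace_coe
  have : CompleteSpace A.ker := A.isClosed_ker.completeSpace_coe
  set N := A.kerᗮ
  set K := A.range
  have hAN : ∀ x, A (N.starProjection x) = A x := fun x =>
    congr($(comp_starProjection_orthogonal_ker A) x)
  let A₁ : N →L[𝕜] K := (A ∘L N.subtypeL).codRestrict K fun x => ⟨x, rfl⟩
  have hinj : A₁.ker = ⊥ := by
    refine LinearMap.ker_eq_bot'.mpr fun m hm => Subtype.ext ?_
    exact (orthogonal_disjoint A.ker).symm.le_bot ⟨m.2, congr($hm)⟩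
  have hsurj : A₁.range = ⊤ := by
    refine LinearMap.range_eq_top.mpr ?_
    rintro ⟨-, x, rfl⟩
    exact ⟨N.orthogonalProjectionOnto x, Subtype.ext (hAN x)⟩
  let e := ContinuousLinearEquiv.ofBijective A₁ hinj hsurj
  let X : F →L[𝕜] E :=
    N.subtypeL ∘L (e.symm : K →L[𝕜] N) ∘L K.orthogonalProjectionOnto
  have hAX : A ∘L X = K.starProjection := by
    ext y
    exact congr($(e.apply_symm_apply (K.orthogonalProjectionOnto y)))
  have hXA : X ∘L A = N.starProjection := by
    ext x
    have : K.orthogonalProjectionOnto (A x) = e (N.orthogonalProjectionOnto x) := by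
      rw [K.orthogonalProjectionOnto_mem_subspace_eq_self (⟨A x, x, rfl⟩ : K)]
      exact Subtype.ext (hAN x).symm
    change ((e.symm (K.orthogonalProjectionOnto (A x)) : N) : E) = _
    rw [this, e.symm_apply_apply]
    rfl
  exact ⟨X, .of_comp_eq_starProjection hAX hXA (fun x => ⟨x, rfl⟩)
    fun y => (e.symm (K.orthogonalProjectionOnto y)).2⟩

end MoorePenrose

theorem isMoorePenroseInverse_pinv {E F : Type*}
    [NormedAddCommGroup E] [InnerProductSpace ℂ E] [CompleteSpace E]
    [NormedAddCommGroup F] [InnerProductSpace ℂ F] [CompleteSpace F] {A : E →L[ℂ] F}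
    (h : ∃ X, IsMoorePenroseInverse A X) : IsMoorePenroseInverse A (pinv A) := by
  obtain ⟨X, h₁, h₂, h₃, h₄⟩ := h
  have hex : ∃ X : F →L[ℂ] E, A ∘L X ∘L A = A ∧ X ∘L A ∘L X = X ∧
      IsSelfAdjoint (A ∘L X) ∧ IsSelfAdjoint (X ∘L A) := ⟨X, h₁, h₂, h₃, h₄⟩
  obtain ⟨h₁', h₂', h₃', h₄'⟩ := hex.choose_spec
  rw [pinv, dif_pos hex]
  exact ⟨h₁', h₂', h₃', h₄'⟩

theorem isClosed_image_of_norm_le_mul_norm {𝕜 E F : Type*} [NontriviallyNormedField 𝕜]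
    [NormedAddCommGroup E] [NormedSpace 𝕜 E] [CompleteSpace E]
    [NormedAddCommGroup F] [NormedSpace 𝕜 F] (L : E →L[𝕜] F) {W : Submodule 𝕜 E}
    (hW : IsClosed (W : Set E)) {c : ℝ} (h : ∀ v ∈ W, ‖v‖ ≤ c * ‖L v‖) :
    IsClosed (L '' W) := by
  have : CompleteSpace W := hW.completeSpace_coe
  have hbound : ∀ w : W, ‖w‖ ≤ c.toNNReal * ‖(L ∘L W.subtypeL) w‖ := fun w =>
    (h w w.2).trans (mul_le_mul_of_nonneg_right (Real.le_coe_toNNReal c) (norm_nonneg _))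
  convert ((L ∘L W.subtypeL).antilipschitz_of_bound hbound).isClosed_range
    (L ∘L W.subtypeL).uniformContinuous using 1
  ext
  simp

section ObliqueProjection

variable {𝕜 E F G : Type*} [RCLike 𝕜]
  [NormedAddCommGroup E] [InnerProductSpace 𝕜 E] [CompleteSpace E]
  [NormedAddCommGroup F] [InnerProductSpace 𝕜 F] [CompleteSpace F]
  [NormedAddCommGroup G] [InnerProductSpace 𝕜 G]

theorem exists_norm_starProjection_le_mul_norm_adjoint {M : Submodule 𝕜 F} [CompleteSpace M]
    (B : E →L[𝕜] F) (hB : B.range = M) :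
    ∃ c, ∀ v, ‖M.starProjection v‖ ≤ c * ‖adjoint B v‖ := by
  have hsurj : Function.Surjective (B.codRestrict M fun x => hB ▸ ⟨x, rfl⟩) := by
    rintro ⟨-, hm⟩
    obtain ⟨x, rfl⟩ := hB ▸ hm
    exact ⟨x, rfl⟩
  obtain ⟨c, hc0, hc⟩ := (B.codRestrict M _).exists_preimage_norm_le hsurj
  refine ⟨c, fun v => ?_⟩
  obtain ⟨x, hx, hxm⟩ := hc (M.orthogonalProjectionOnto v)
  have hBx : B x = M.starProjection v := congr($hx)
  have hsq : ‖M.starProjection v‖ ^ 2 ≤ c * ‖M.starProjection v‖ * ‖adjoint B v‖ :=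
    calc ‖M.starProjection v‖ ^ 2 = RCLike.re ⟪x, adjoint B v⟫_𝕜 := by
          rw [adjoint_inner_right, hBx, re_inner_starProjection_eq_normSq]; rfl
      _ ≤ ‖x‖ * ‖adjoint B v‖ := re_inner_le_norm _ _
      _ ≤ c * ‖M.starProjection v‖ * ‖adjoint B v‖ := by gcongr; exact hxm
  rcases (norm_nonneg (M.starProjection v)).eq_or_lt with h0 | hpos
  · rw [← h0]
    positivity
  · exact le_of_mul_le_mul_right (by linarith) hpos

omit [CompleteSpace E] [CompleteSpace F] in
theorem norm_le_mul_norm_starProjection_of_isTopCompl {W M : Submodule 𝕜 F}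
    [M.HasOrthogonalProjection] (h : IsTopCompl W Mᗮ) {v : F} (hv : v ∈ W) :
    ‖v‖ ≤ ‖W.projectionL Mᗮ h‖ * ‖M.starProjection v‖ := by
  have hPv : W.projectionL Mᗮ h (M.starProjection v) = v := by
    have hker : W.projectionL Mᗮ h (v - M.starProjection v) = 0 :=
      (projectionL_apply_eq_zero_iff h).mpr (sub_starProjection_mem_orthogonal v)
    rwa [map_sub, (projectionL_eq_self_iff h v).mpr hv, sub_eq_zero, eq_comm] at hker
  calc ‖v‖ = ‖W.projectionL Mᗮ h (M.starProjection v)‖ := by rw [hPv]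
    _ ≤ ‖W.projectionL Mᗮ h‖ * ‖M.starProjection v‖ := le_opNorm _ _

theorem exists_norm_le_mul_norm_adjoint_of_isTopCompl {W : Submodule 𝕜 F} {B : E →L[𝕜] F}
    (hB : IsClosed (B.range : Set F)) (hc : IsTopCompl W B.rangeᗮ) :
    ∃ c, ∀ v ∈ W, ‖v‖ ≤ c * ‖adjoint B v‖ := by
  have : CompleteSpace B.range := hB.completeSpace_coe
  obtain ⟨c, hBc⟩ := exists_norm_starProjection_le_mul_norm_adjoint B rfl
  refine ⟨‖W.projectionL _ hc‖ * c, fun v hv => ?_⟩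
  calc ‖v‖ ≤ ‖W.projectionL _ hc‖ * ‖B.range.starProjection v‖ :=
        norm_le_mul_norm_starProjection_of_isTopCompl hc hv
    _ ≤ ‖W.projectionL _ hc‖ * (c * ‖adjoint B v‖) := by gcongr; exact hBc v
    _ = ‖W.projectionL _ hc‖ * c * ‖adjoint B v‖ := by ring

theorem isClosed_range_adjoint_comp {W : Submodule 𝕜 F} {B : E →L[𝕜] F} {R : G →L[𝕜] F}
    (hB : IsClosed (B.range : Set F)) (hc : IsTopCompl W B.rangeᗮ) (hR : R.range = W) :
    IsClosed ((adjoint B ∘L R).range : Set E) := by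
  obtain ⟨c, hBc⟩ := exists_norm_le_mul_norm_adjoint_of_isTopCompl hB hc
  have himage : ((adjoint B ∘L R).range : Set E) = adjoint B '' W := by
    rw [← hR]
    ext
    simp
  rw [himage]
  exact isClosed_image_of_norm_le_mul_norm _ hc.isClosed hBc

theorem comp_comp_adjoint_eq_projectionL {W : Submodule 𝕜 F} {B : E →L[𝕜] F}
    {R : G →L[𝕜] F} {X : E →L[𝕜] G} (hc : IsTopCompl W B.rangeᗮ) (hR : R.range = W)
    (hX : (adjoint B ∘L R) ∘L X ∘L (adjoint B ∘L R) = adjoint B ∘L R) :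
    R ∘L X ∘L adjoint B = W.projectionL _ hc := by
  refine eq_projectionL_of_forall_mem hc (fun v hv => ?_) fun v hv => ?_
  · obtain ⟨x, rfl⟩ := hR ▸ hv
    refine LinearMap.apply_comp_comp_eq_self_of_disjoint (f := R.toLinearMap)
      (g := (adjoint B).toLinearMap) (h := X.toLinearMap)
      (fun x => by simpa using congr($hX x)) ?_ x
    rw [hR, ← orthogonal_range]
    exact hc.isCompl.disjoint
  · rw [orthogonal_range] at hv
    have hBv : adjoint B v = 0 := hv
    simp [hBv]

end ObliqueProjection

theorem hasSum_inner_smul_apply_single {ι 𝕜 E : Type*} [RCLike 𝕜] [DecidableEq ι]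
    [NormedAddCommGroup E] [InnerProductSpace 𝕜 E] [CompleteSpace E]
    (T U : lp (fun _ : ι => 𝕜) 2 →L[𝕜] E) (g : E) :
    HasSum (fun n => ⟪U (lp.single 2 n 1), g⟫_𝕜 • T (lp.single 2 n 1))
      (T (adjoint U g)) := by
  have : Fact ((1 : ENNReal) ≤ 2) := ⟨by norm_num⟩
  convert (lp.hasSum_single (by norm_num) (adjoint U g)).mapL T using 2 with n
  rw [← adjoint_inner_right, lp.inner_single_left, ← map_smul, ← lp.single_smul, smul_eq_mul,
    mul_one]
  simp

theorem stmt19_general (W M : Submodule ℂ H)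
    (hW : IsClosed (W : Set H)) (hM : IsClosed (M : Set H))
    (hcompl : IsCompl W Mᗮ)
    (f : ℕ → H)
    (T : lp (fun _ : ℕ => ℂ) 2 →L[ℂ] H) (hT : ∀ n, T (lp.single 2 n 1) = f n)
    (hTrange : LinearMap.range (T : lp (fun _ : ℕ => ℂ) 2 →ₗ[ℂ] H) = W)
    (Bop : lp (fun _ : ℕ => ℂ) 2 →L[ℂ] H) (hBrange : LinearMap.range (Bop : lp (fun _ : ℕ => ℂ) 2 →ₗ[ℂ] H) = M)
    (D Droot : lp (fun _ : ℕ => ℂ) 2 →L[ℂ] lp (fun _ : ℕ => ℂ) 2)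
    (hDinv : ∃ Dinv, D ∘L Dinv = 1 ∧ Dinv ∘L D = 1)
    (hroot : Droot.IsPositive) (hroot2 : Droot ∘L Droot = D)
    (That : lp (fun _ : ℕ => ℂ) 2 →L[ℂ] H)
    (hThat : That = Bop ∘L pinv (Droot ∘L ContinuousLinearMap.adjoint T ∘L Bop) ∘L Droot)
    (Q : H →L[ℂ] H) (hQ : Q = T ∘L ContinuousLinearMap.adjoint That) :
    Q ∘L Q = Q
    ∧ LinearMap.range (Q : H →ₗ[ℂ] H) = W
    ∧ LinearMap.ker (Q : H →ₗ[ℂ] H) = Mᗮ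
    ∧ (∀ n, That (lp.single 2 n 1) ∈ M)
    ∧ ∀ g ∈ W, HasSum (fun n => (inner ℂ (That (lp.single 2 n 1)) g : ℂ) • f n) g := by
  subst hBrange
  obtain ⟨Dinv, hDDinv, -⟩ := hDinv
  have hDroot : Function.Surjective Droot := fun y =>
    ⟨Droot (Dinv y), by simpa [← hroot2] using congr($hDDinv y)⟩
  set R := T ∘L Droot
  have hR : R.range = W := by
    change LinearMap.range (T.toLinearMap ∘ₗ Droot.toLinearMap) = W
    rw [LinearMap.range_comp_of_range_eq_top _ (LinearMap.range_eq_top.mpr hDroot), hTrange]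
  set A := Droot ∘L adjoint T ∘L Bop
  have hA : adjoint A = adjoint Bop ∘L R := by
    simp [A, R, adjoint_comp, hroot.isSelfAdjoint.adjoint_eq, comp_assoc]
  have hTop := IsCompl.isTopCompl_of_isClosed hcompl hW (isClosed_orthogonal _)
  have hpinv : IsMoorePenroseInverse (adjoint A) (adjoint (pinv A)) := by
    refine (isMoorePenroseInverse_pinv ?_).adjoint
    obtain ⟨X, hX⟩ := exists_isMoorePenroseInverse (adjoint A)
      (hA ▸ isClosed_range_adjoint_comp hM hTop hR)
    exact ⟨adjoint X, by simpa using hX.adjoint⟩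
  have hQP : Q = W.projectionL _ hTop := by
    have hQR : Q = R ∘L adjoint (pinv A) ∘L adjoint Bop := by
      simp [hQ, hThat, R, adjoint_comp, hroot.isSelfAdjoint.adjoint_eq, comp_assoc]
    rw [hQR]
    exact comp_comp_adjoint_eq_projectionL hTop hR (hA ▸ hpinv.mul_inv_mul)
  refine ⟨hQP ▸ isIdempotentElem_projectionL hTop, hQP ▸ range_projectionL hTop,
    hQP ▸ ker_projectionL hTop, fun n => hThat ▸ ⟨_, rfl⟩, fun g hg => ?_⟩
  have hTg : T (adjoint That g) = g := by
    rw [← comp_apply, ← hQ, hQP]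
    exact (projectionL_eq_self_iff hTop g).mpr hg
  simpa only [hT, hTg] using hasSum_inner_smul_apply_single T That g

/-- Let `T` be the synthesis operator of a frame `{f_n}` for `W`, `M` a closed subspace with
`H = W ∔ M^⊥`, `B` an operator with `R(B) = M`, and `D` positive, invertible and diagonal.
With `T̂ = B (D^{1/2} T* B)† D^{1/2}`, the operator `T T̂*` is the oblique projection onto `W`
with kernel `M^⊥`, and `{g_n} = {T̂ e_n}` is an oblique dual frame of `{f_n}` in `M`:
`f = Σ_n ⟨f, g_n⟩ f_n` for all `f ∈ W`. -/
theorem stmt19 (W M : Submodule ℂ H)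
    (hW : IsClosed (W : Set H)) (hM : IsClosed (M : Set H))
    (hcompl : IsCompl W Mᗮ)
    (f : ℕ → H) (hfW : ∀ n, f n ∈ W)
    (A B : ℝ) (hA : 0 < A) (hB : 0 < B)
    (hframe : ∀ g ∈ W, A * ‖g‖ ^ 2 ≤ ∑' n, ‖(inner ℂ (f n) g : ℂ)‖ ^ 2 ∧
      ∑' n, ‖(inner ℂ (f n) g : ℂ)‖ ^ 2 ≤ B * ‖g‖ ^ 2)
    (T : lp (fun _ : ℕ => ℂ) 2 →L[ℂ] H) (hT : ∀ n, T (lp.single 2 n 1) = f n)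
    (hTrange : LinearMap.range (T : lp (fun _ : ℕ => ℂ) 2 →ₗ[ℂ] H) = W)
    (Bop : lp (fun _ : ℕ => ℂ) 2 →L[ℂ] H) (hBrange : LinearMap.range (Bop : lp (fun _ : ℕ => ℂ) 2 →ₗ[ℂ] H) = M)
    (D Droot : lp (fun _ : ℕ => ℂ) 2 →L[ℂ] lp (fun _ : ℕ => ℂ) 2)
    (hDpos : D.IsPositive)
    (hDdiag : ∀ n : ℕ, ∃ d : ℂ, D (lp.single 2 n 1) = d • lp.single 2 n 1)
    (hDinv : ∃ Dinv, D ∘L Dinv = 1 ∧ Dinv ∘L D = 1)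
    (hroot : Droot.IsPositive) (hroot2 : Droot ∘L Droot = D)
    (That : lp (fun _ : ℕ => ℂ) 2 →L[ℂ] H)
    (hThat : That = Bop ∘L pinv (Droot ∘L ContinuousLinearMap.adjoint T ∘L Bop) ∘L Droot)
    (Q : H →L[ℂ] H) (hQ : Q = T ∘L ContinuousLinearMap.adjoint That) :
    Q ∘L Q = Q
    ∧ LinearMap.range (Q : H →ₗ[ℂ] H) = W
    ∧ LinearMap.ker (Q : H →ₗ[ℂ] H) = Mᗮ
    ∧ (∀ n, That (lp.single 2 n 1) ∈ M)
    ∧ ∀ g ∈ W, HasSum (fun n => (inner ℂ (That (lp.single 2 n 1)) g : ℂ) • f n) g :=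
  stmt19_general W M hW hM hcompl f T hT hTrange Bop hBrange D Droot hDinv hroot hroot2 That hThat Q
    hQ
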